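/- If a location x of n ≥ 2 vendors on the circle satisfies |I_k| + |I_{k+1}| < |Ī| for some k (with I_j the cyclic intervals between consecutive vendors and |Ī| the maximum interval length), then x is not an equilibrium: some vendor can strictly increase its profit by relocating into the interior of a maximal gap. -/

import Mathlib

noncomputable section

/-- Shortest arc distance on the circle of circumference 1. -/
def circleDist (x y : ℝ) : ℝ := min |x - y + 1| (min |x - y| |x - y - 1|)

open scoped Classical

/-- The set of vendors nearest to the customer at `y`. -/
def nearest {n : ℕ} (ξ : Fin n → ℝ) (y : ℝ) : Finset (Fin n) :=
  Finset.univ.filter fun j => ∀ i, circleDist (ξ j) y ≤ circleDist (ξ i) y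

/-- Density of demand of customer `y` going to vendor `k`. -/
def rho {n : ℕ} (ξ : Fin n → ℝ) (k : Fin n) (y : ℝ) : ℝ :=
  if k ∈ nearest ξ y then (1 : ℝ) / (nearest ξ y).card else 0

/-- Profit of vendor `k`. -/
def profit {n : ℕ} (k : Fin n) (ξ : Fin n → ℝ) : ℝ :=
  ∫ y in (0:ℝ)..1, rho ξ k y

/-- Equilibrium: no vendor can strictly increase profit by unilateral relocation. -/
def IsEquilibrium {n : ℕ} (x : Fin n → ℝ) : Prop :=
  ∀ k : Fin n, ∀ x' ∈ Set.Icc (0:ℝ) 1,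
    profit k (Function.update x k x') ≤ profit k x

/-- Length of the cyclic gap `I_j = [x_j, x_{j+1}]` (for sorted `x` with `x 0 = 0`). -/
def gap {n : ℕ} [NeZero n] (x : Fin n → ℝ) (j : Fin n) : ℝ :=
  (if (j : ℕ) + 1 = n then 1 else 0) + x (j + 1) - x j

/-- The right endpoint of gap `I_j`, unwrapped to the real line. -/
def nextVal {n : ℕ} [NeZero n] (x : Fin n → ℝ) (j : Fin n) : ℝ :=
  (if (j : ℕ) + 1 = n then 1 else 0) + x (j + 1)

/-- Maximum cyclic gap length `|Ī|`. -/
def maxGap {n : ℕ} [NeZero n] (x : Fin n → ℝ) : ℝ := ⨆ j, gap x j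

/-!
Distances are computed in `ℝ/ℤ` (`UnitAddCircle`): on `[0, 1]`, `circleDist` is the quotient
norm. A customer of vendor `k + 1` is at least as close to it as to its neighbours `k` and
`k + 2`, so the customers of `k + 1` form an arc of length `(|I_k| + |I_{k+1}|) / 2` around it.
If one of these gaps is empty, the arc may reach up to half a maximal gap on that side, but then
another vendor stands at the same point and shares every customer. Either way vendor `k + 1`
earns less than `|Ī| / 2`. Moved to the midpoint of a maximal gap, it is the unique nearest
vendor of all customers within `|Ī| / 4` of it, and so earns at least `|Ī| / 2`.
-/

open Set MeasureTheory

namespace UnitAddCircle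

theorem norm_coe_le_abs (t : ℝ) : ‖(t : UnitAddCircle)‖ ≤ |t| :=
  QuotientAddGroup.norm_mk_le_norm

theorem lt_norm_coe_of_mem_Ioo {r t : ℝ} (ht : t ∈ Ioo r (1 - r)) :
    r < ‖(t : UnitAddCircle)‖ := by
  rw [norm_eq]
  rcases le_or_gt (round t) 0 with h | h
  · have : (round t : ℝ) ≤ 0 := by exact_mod_cast h
    exact (by linarith [ht.1] : r < t - round t).trans_le (le_abs_self _)
  · have : (1 : ℝ) ≤ round t := by exact_mod_cast h
    exact (by linarith [ht.2] : r < -(t - round t)).trans_le (neg_le_abs _)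

theorem exists_coe_eq_and_abs_eq_norm (u : UnitAddCircle) :
    ∃ θ : ℝ, (θ : UnitAddCircle) = u ∧ |θ| = ‖u‖ := by
  induction u using QuotientAddGroup.induction_on with
  | H t => exact ⟨t - round t, by simp, norm_eq.symm⟩

theorem le_half_of_abs_le_norm_coe_sub {θ b : ℝ} (hb : 0 < b)
    (h : |θ| ≤ ‖((θ - b : ℝ) : UnitAddCircle)‖) : θ ≤ b / 2 := by
  by_contra! hθ
  have : |θ - b| < |θ| := by
    rw [abs_of_pos (by linarith : (0:ℝ) < θ), abs_lt]; constructor <;> linarith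
  linarith [norm_coe_le_abs (θ - b)]

end UnitAddCircle

theorem min_abs_eq_norm_coe {t : ℝ} (ht : |t| ≤ 1) :
    min |t + 1| (min |t| |t - 1|) = ‖(t : UnitAddCircle)‖ := by
  refine le_antisymm ?_ (le_min ?_ (le_min ?_ ?_))
  · have hround := abs_sub_round t
    have h₁ : (round t : ℝ) < 2 := by linarith [(abs_le.mp ht).2, (abs_le.mp hround).1]
    have h₂ : (-2 : ℝ) < round t := by linarith [(abs_le.mp ht).1, (abs_le.mp hround).2]
    have h₁' : round t < 2 := by exact_mod_cast h₁
    have h₂' : -2 < round t := by exact_mod_cast h₂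
    rw [UnitAddCircle.norm_eq]
    interval_cases round t <;> simp
  · simpa using UnitAddCircle.norm_coe_le_abs (t + 1)
  · exact UnitAddCircle.norm_coe_le_abs t
  · simpa [AddCircle.coe_sub, AddCircle.coe_period] using UnitAddCircle.norm_coe_le_abs (t - 1)

theorem circleDist_eq_norm {a y : ℝ} (ha : a ∈ Icc (0:ℝ) 1) (hy : y ∈ Icc (0:ℝ) 1) :
    circleDist a y = ‖(a : UnitAddCircle) - y‖ := by
  rw [circleDist, min_abs_eq_norm_coe, AddCircle.coe_sub]
  exact abs_le.mpr ⟨by linarith [ha.1, hy.2], by linarith [ha.2, hy.1]⟩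

theorem continuous_circleDist (a : ℝ) : Continuous (circleDist a) := by
  unfold circleDist; fun_prop

def vendorsAt {n : ℕ} (ξ : Fin n → ℝ) (p : UnitAddCircle) : Finset (Fin n) :=
  {i | (ξ i : UnitAddCircle) = p}

section Nearest

variable {n : ℕ} {ξ : Fin n → ℝ} {k : Fin n} {y : ℝ}

theorem mem_nearest_iff_norm (hξ : ∀ i, ξ i ∈ Icc (0:ℝ) 1) (hy : y ∈ Icc (0:ℝ) 1) :
    k ∈ nearest ξ y ↔
      ∀ i, ‖(ξ k : UnitAddCircle) - y‖ ≤ ‖(ξ i : UnitAddCircle) - y‖ := by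
  simp only [nearest, Finset.mem_filter, Finset.mem_univ, true_and,
    circleDist_eq_norm (hξ _) hy]

theorem nearest_eq_singleton_of_norm_lt (hξ : ∀ i, ξ i ∈ Icc (0:ℝ) 1)
    (hy : y ∈ Icc (0:ℝ) 1)
    (h : ∀ i ≠ k, ‖(ξ k : UnitAddCircle) - y‖ < ‖(ξ i : UnitAddCircle) - y‖) :
    nearest ξ y = {k} := by
  refine Finset.eq_singleton_iff_unique_mem.mpr ⟨(mem_nearest_iff_norm hξ hy).mpr fun i => ?_,
    fun i hi => by_contra fun hik => ((mem_nearest_iff_norm hξ hy).mp hi k).not_gt (h i hik)⟩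
  rcases eq_or_ne i k with rfl | hik
  exacts [le_rfl, (h i hik).le]

theorem vendorsAt_subset_nearest (hξ : ∀ i, ξ i ∈ Icc (0:ℝ) 1) (hy : y ∈ Icc (0:ℝ) 1)
    (hk : k ∈ nearest ξ y) :
    vendorsAt ξ (ξ k) ⊆ nearest ξ y := fun i hi => by
  rw [mem_nearest_iff_norm hξ hy] at hk ⊢
  simpa [(Finset.mem_filter.mp hi).2] using hk

end Nearest

section Demand

variable {n : ℕ} (ξ : Fin n → ℝ)

theorem isClosed_setOf_mem_nearest (k : Fin n) : IsClosed {y | k ∈ nearest ξ y} := by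
  simp only [nearest, Finset.mem_filter, Finset.mem_univ, true_and, ofPred_forall]
  exact isClosed_iInter fun i => isClosed_le (continuous_circleDist _) (continuous_circleDist _)

theorem measurable_rho (k : Fin n) : Measurable (rho ξ k) := by
  have hmem (i : Fin n) : MeasurableSet {y | i ∈ nearest ξ y} :=
    (isClosed_setOf_mem_nearest ξ i).measurableSet
  have hcard : Measurable fun y => ((nearest ξ y).card : ℝ) := by
    simp only [nearest, Finset.natCast_card_filter]
    exact Finset.measurable_sum _ fun i _ => Measurable.ite (by simpa [nearest] using hmem i)
      measurable_const measurable_const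
  exact Measurable.ite (hmem k) (measurable_const.div hcard) measurable_const

theorem rho_nonneg (k : Fin n) (y : ℝ) : 0 ≤ rho ξ k y := by
  unfold rho; split_ifs <;> positivity

theorem rho_le_one_div_of_le_card {k : Fin n} {y : ℝ} {m : ℕ} (hm : 0 < m)
    (h : k ∈ nearest ξ y → m ≤ (nearest ξ y).card) : rho ξ k y ≤ 1 / m := by
  unfold rho
  split_ifs with hk
  · exact one_div_le_one_div_of_le (by exact_mod_cast hm) (by exact_mod_cast h hk)
  · positivity

theorem integrableOn_rho (k : Fin n) : IntegrableOn (rho ξ k) (Ioc (0:ℝ) 1) := by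
  refine Measure.integrableOn_of_bounded (M := 1) (by simp)
    (measurable_rho ξ k).aestronglyMeasurable (ae_of_all _ fun y => ?_)
  rw [Real.norm_eq_abs, abs_of_nonneg (rho_nonneg ξ k y)]
  simpa using rho_le_one_div_of_le_card ξ one_pos (fun hk => Finset.card_pos.mpr ⟨k, hk⟩)

theorem profit_eq_setIntegral (k : Fin n) : profit k ξ = ∫ y in Ioc (0:ℝ) 1, rho ξ k y :=
  intervalIntegral.integral_of_le zero_le_one

theorem le_profit_of_nearest_eq_singleton {k : Fin n} {a b : ℝ} (hab : a ≤ b)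
    (hsub : Ioo a b ⊆ Ioc (0:ℝ) 1) (h : ∀ y ∈ Ioo a b, nearest ξ y = {k}) :
    b - a ≤ profit k ξ := by
  have hone : EqOn (rho ξ k) 1 (Ioo a b) := fun y hy => by simp [rho, h y hy]
  calc b - a = ∫ y in Ioo a b, rho ξ k y := by
        rw [setIntegral_congr_fun measurableSet_Ioo hone]; simp [hab]
    _ ≤ ∫ y in Ioc (0:ℝ) 1, rho ξ k y :=
        setIntegral_mono_set (integrableOn_rho ξ k) (ae_of_all _ (rho_nonneg ξ k))
          hsub.eventuallyLE
    _ = profit k ξ := (profit_eq_setIntegral ξ k).symm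

theorem profit_le_of_forall_mem_nearest {k : Fin n} {z : UnitAddCircle} {r : ℝ} {m : ℕ}
    (hr : 0 ≤ r) (hm : 0 < m)
    (h : ∀ y ∈ Ioc (0:ℝ) 1, k ∈ nearest ξ y →
      (y : UnitAddCircle) ∈ Metric.closedBall z r ∧ m ≤ (nearest ξ y).card) :
    profit k ξ ≤ 2 * r / m := by
  set P := ((↑) : ℝ → UnitAddCircle) ⁻¹' Metric.closedBall z r ∩ Ioc 0 (0 + 1)
  have hP : MeasurableSet P :=
    (AddCircle.measurable_mk' measurableSet_closedBall).inter measurableSet_Ioc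
  have hvol : volume.real P ≤ 2 * r := by
    rw [measureReal_def, ← AddCircle.add_projection_respects_measure 1 0 measurableSet_closedBall,
      AddCircle.volume_closedBall, ENNReal.toReal_ofReal (by positivity)]
    exact min_le_right _ _
  have hzero : ∀ y ∈ Ioc (0:ℝ) 1 \ P, rho ξ k y = 0 := fun y hy => by
    simp only [rho, ite_eq_right_iff]
    exact fun hk => absurd ⟨(h y hy.1 hk).1, by simpa using hy.1⟩ hy.2
  calc profit k ξ = ∫ y in P, rho ξ k y := by
        rw [profit_eq_setIntegral, setIntegral_eq_of_subset_of_forall_sdiff_eq_zero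
          measurableSet_Ioc (by simp [P]) hzero]
    _ ≤ 1 / m * volume.real P := by
        refine (Real.le_norm_self _).trans
          (norm_setIntegral_le_of_norm_le_const ?_ fun y hy => ?_)
        · exact (measure_mono inter_subset_right).trans_lt (by simp)
        · rw [Real.norm_eq_abs, abs_of_nonneg (rho_nonneg ξ k y)]
          exact rho_le_one_div_of_le_card ξ hm fun hk => (h y (by simpa using hy.2) hk).2
    _ ≤ 2 * r / m := by
        rw [one_div_mul_eq_div]; gcongr

end Demand

section Gaps

variable {n : ℕ} [NeZero n]

theorem Fin.val_add_one_eq_ite (t : Fin n) :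
    ((t + 1 : Fin n) : ℕ) = if (t : ℕ) + 1 = n then (0 : ℕ) else (t : ℕ) + 1 := by
  split_ifs with h
  · rw [Fin.val_add, Fin.val_one', Nat.add_mod_mod, h, Nat.mod_self]
  · exact Fin.val_add_one_of_lt' (lt_of_le_of_ne t.isLt h)

theorem nextVal_eq_add_gap (x : Fin n → ℝ) (j : Fin n) : nextVal x j = x j + gap x j := by
  unfold nextVal gap; ring

theorem coe_nextVal (x : Fin n → ℝ) (j : Fin n) :
    (nextVal x j : UnitAddCircle) = x (j + 1) := by
  unfold nextVal
  split_ifs <;> simp [AddCircle.coe_period]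

theorem gap_le_maxGap (x : Fin n → ℝ) (j : Fin n) : gap x j ≤ maxGap x :=
  le_ciSup (Set.finite_range _).bddAbove j

theorem exists_gap_eq_maxGap (x : Fin n → ℝ) : ∃ l, gap x l = maxGap x :=
  exists_eq_ciSup_of_finite

theorem le_card_vendorsAt (hn : 3 ≤ n) (x : Fin n → ℝ) (k : Fin n) :
    1 + (if gap x k = 0 then 1 else 0) + (if gap x (k + 1) = 0 then 1 else 0) ≤
      (vendorsAt x (x (k + 1))).card := by
  have hval := Fin.val_add_one_eq_ite (n := n)
  have h₁ : k ≠ k + 1 := Fin.ne_of_val_ne <| by rw [hval]; split_ifs <;> omega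
  have h₂ : k ≠ k + 1 + 1 := Fin.ne_of_val_ne <| by rw [hval, hval]; split_ifs <;> omega
  have h₃ : k + 1 ≠ k + 1 + 1 := Fin.ne_of_val_ne <| by rw [hval (k + 1)]; split_ifs <;> omega
  have hcoe (i : Fin n) (h : gap x i = 0) : (x i : UnitAddCircle) = x (i + 1) := by
    rw [← coe_nextVal, nextVal_eq_add_gap, h, add_zero]
  calc _ ≤ (({k, k + 1, k + 1 + 1} : Finset (Fin n)).filter
        (· ∈ vendorsAt x (x (k + 1)))).card := by
        rw [Finset.card_filter, Finset.sum_insert (by simp [h₁, h₂]),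
          Finset.sum_insert (by simp [h₃]), Finset.sum_singleton]
        have hind {p q : Prop} [Decidable p] [Decidable q] (h : p → q) :
            (if p then 1 else 0) ≤ if q then 1 else 0 := by
          split_ifs <;> simp_all
        have hk := hind (p := gap x k = 0) (q := k ∈ vendorsAt x (x (k + 1))) fun h => by
          simpa [vendorsAt] using hcoe k h
        have hk' := hind (p := gap x (k + 1) = 0) (q := k + 1 + 1 ∈ vendorsAt x (x (k + 1)))
          fun h => by simpa [vendorsAt] using (hcoe (k + 1) h).symm
        have hj : k + 1 ∈ vendorsAt x (x (k + 1)) := by simp [vendorsAt]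
        rw [if_pos hj]
        omega
    _ ≤ _ := Finset.card_le_card fun i hi => (Finset.mem_filter.mp hi).2

theorem ite_add_ite_lt_mul {a b L : ℝ} {m : ℕ} (ha : 0 ≤ a) (hb : 0 ≤ b) (hab : a + b < L)
    (hm : 1 + (if a = 0 then 1 else 0) + (if b = 0 then 1 else 0) ≤ m) :
    (if a = 0 then L else a) + (if b = 0 then L else b) < m * L := by
  have hm' : (1 + (if a = 0 then 1 else 0) + (if b = 0 then 1 else 0) : ℝ) ≤ m := by
    exact_mod_cast hm
  split_ifs at hm' ⊢ <;> nlinarith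

end Gaps

structure IsSortedLocation {n : ℕ} [NeZero n] (x : Fin n → ℝ) : Prop where
  map_zero : x 0 = 0
  monotone : Monotone x
  le_one : ∀ j, x j ≤ 1

namespace IsSortedLocation

variable {n : ℕ} [NeZero n] {x : Fin n → ℝ}

theorem nonneg (hx : IsSortedLocation x) (i : Fin n) : 0 ≤ x i :=
  hx.map_zero ▸ hx.monotone (Fin.zero_le i)

theorem mem_Icc (hx : IsSortedLocation x) (i : Fin n) : x i ∈ Icc (0:ℝ) 1 :=
  ⟨hx.nonneg i, hx.le_one i⟩

theorem nextVal_eq_one (hx : IsSortedLocation x) {j : Fin n} (h : (j : ℕ) + 1 = n) :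
    nextVal x j = 1 := by
  have : j + 1 = 0 := Fin.ext (by rw [Fin.val_add_one_eq_ite, if_pos h, Fin.val_zero])
  simp [nextVal, h, this, hx.map_zero]

theorem nextVal_le_one (hx : IsSortedLocation x) (j : Fin n) : nextVal x j ≤ 1 := by
  by_cases h : (j : ℕ) + 1 = n
  · exact (hx.nextVal_eq_one h).le
  · simpa [nextVal, h] using hx.le_one (j + 1)

theorem gap_nonneg (hx : IsSortedLocation x) (j : Fin n) : 0 ≤ gap x j := by
  by_cases h : (j : ℕ) + 1 = n
  · linarith [nextVal_eq_add_gap x j, hx.nextVal_eq_one h, hx.le_one j]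
  · have : j ≤ j + 1 := by rw [Fin.le_def, Fin.val_add_one_eq_ite, if_neg h]; omega
    simpa [gap, h] using hx.monotone this

theorem le_or_nextVal_le (hx : IsSortedLocation x) (l i : Fin n) :
    x i ≤ x l ∨ nextVal x l ≤ x i := by
  rcases le_or_gt i l with hil | hli
  · exact Or.inl (hx.monotone hil)
  · have h : (l : ℕ) + 1 ≠ n := by have := i.isLt; rw [Fin.lt_def] at hli; omega
    have : l + 1 ≤ i := by rw [Fin.le_def, Fin.val_add_one_eq_ite, if_neg h]; exact hli
    simpa [nextVal, h] using Or.inr (hx.monotone this)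

theorem exists_mem_Icc_nextVal (hx : IsSortedLocation x) {y : ℝ} (hy : y ∈ Icc (0:ℝ) 1) :
    ∃ i, y ∈ Icc (x i) (nextVal x i) := by
  let below : Finset (Fin n) := {i | x i ≤ y}
  have hbelow : below.Nonempty := ⟨0, by simp [below, hx.map_zero, hy.1]⟩
  refine ⟨below.max' hbelow, (Finset.mem_filter.mp (below.max'_mem hbelow)).2, ?_⟩
  by_cases h : ((below.max' hbelow : Fin n) : ℕ) + 1 = n
  · exact (hx.nextVal_eq_one h).symm ▸ hy.2
  · by_contra! hlt
    have hmem : below.max' hbelow + 1 ∈ below := by simpa [below, nextVal, h] using hlt.le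
    have := below.le_max' _ hmem
    rw [Fin.le_def, Fin.val_add_one_eq_ite, if_neg h] at this
    omega

theorem exists_norm_sub_le_half_maxGap (hx : IsSortedLocation x) {y : ℝ}
    (hy : y ∈ Icc (0:ℝ) 1) : ∃ i, ‖(x i : UnitAddCircle) - y‖ ≤ maxGap x / 2 := by
  obtain ⟨i, hyi, hyi'⟩ := hx.exists_mem_Icc_nextVal hy
  have hleft : ‖(x i : UnitAddCircle) - y‖ ≤ y - x i := by
    rw [← AddCircle.coe_sub, ← norm_neg, ← AddCircle.coe_neg, neg_sub]
    exact (UnitAddCircle.norm_coe_le_abs _).trans_eq (abs_of_nonneg (by linarith))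
  have hright : ‖(x (i + 1) : UnitAddCircle) - y‖ ≤ nextVal x i - y := by
    rw [← coe_nextVal, ← AddCircle.coe_sub]
    exact (UnitAddCircle.norm_coe_le_abs _).trans_eq (abs_of_nonneg (by linarith))
  have hgap : y - x i + (nextVal x i - y) ≤ maxGap x := by
    linarith [nextVal_eq_add_gap x i, gap_le_maxGap x i]
  by_cases hi : y - x i ≤ maxGap x / 2
  · exact ⟨i, hleft.trans hi⟩
  · exact ⟨i + 1, hright.trans (by linarith)⟩


theorem half_gap_le_profit_update (hx : IsSortedLocation x) (j l : Fin n) :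
    gap x l / 2 ≤ profit j (Function.update x j (x l + gap x l / 2)) := by
  set g := gap x l
  have hg := hx.gap_nonneg l
  have hnext : x l + g ≤ 1 := nextVal_eq_add_gap x l ▸ hx.nextVal_le_one l
  have hxl := hx.nonneg l
  have hξ (i : Fin n) : Function.update x j (x l + g / 2) i ∈ Icc (0:ℝ) 1 := by
    rcases eq_or_ne i j with rfl | hij
    · rw [Function.update_self]; constructor <;> linarith
    · rw [Function.update_of_ne hij]; exact hx.mem_Icc i
  have hsub : Ioo (x l + g / 4) (x l + 3 * g / 4) ⊆ Ioc (0:ℝ) 1 := fun y hy =>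
    ⟨by linarith [hy.1], by linarith [hy.2]⟩
  refine le_of_eq_of_le (by ring) (le_profit_of_nearest_eq_singleton _ (by linarith) hsub
    fun y hy => nearest_eq_singleton_of_norm_lt hξ (Ioc_subset_Icc_self (hsub hy)) fun i hij => ?_)
  obtain ⟨hy₁, hy₂⟩ := hy
  rw [Function.update_self, Function.update_of_ne hij, ← AddCircle.coe_sub, ← AddCircle.coe_sub]
  calc ‖((x l + g / 2 - y : ℝ) : UnitAddCircle)‖ ≤ |x l + g / 2 - y| :=
        UnitAddCircle.norm_coe_le_abs _
    _ < g / 4 := abs_lt.mpr ⟨by linarith, by linarith⟩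
    _ < ‖((x i - y : ℝ) : UnitAddCircle)‖ := by
      rcases hx.le_or_nextVal_le l i with hi | hi
      · rw [← norm_neg, ← AddCircle.coe_neg, neg_sub]
        exact UnitAddCircle.lt_norm_coe_of_mem_Ioo ⟨by linarith, by linarith [hx.nonneg i]⟩
      · rw [nextVal_eq_add_gap] at hi
        exact UnitAddCircle.lt_norm_coe_of_mem_Ioo ⟨by linarith, by linarith [hx.le_one i]⟩


theorem offset_le_of_mem_nearest (hx : IsSortedLocation x) {j : Fin n} {y θ : ℝ}
    (hy : y ∈ Icc (0:ℝ) 1) (hj : j ∈ nearest x y) (hθ : (θ : UnitAddCircle) = y - x j)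
    (hθn : |θ| = ‖(x j : UnitAddCircle) - y‖) :
    θ ≤ (if gap x j = 0 then maxGap x else gap x j) / 2 := by
  rw [mem_nearest_iff_norm hx.mem_Icc hy] at hj
  split_ifs with hb
  · obtain ⟨i, hi⟩ := hx.exists_norm_sub_le_half_maxGap hy
    linarith [le_abs_self θ, hj i]
  · refine UnitAddCircle.le_half_of_abs_le_norm_coe_sub ((hx.gap_nonneg j).lt_of_ne' hb) ?_
    have : ((θ - gap x j : ℝ) : UnitAddCircle) = -((x (j + 1) : UnitAddCircle) - y) := by
      rw [← coe_nextVal, nextVal_eq_add_gap, AddCircle.coe_sub, hθ, AddCircle.coe_add]; abel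
    rw [hθn, this, norm_neg]
    exact hj (j + 1)

theorem neg_offset_le_of_mem_nearest (hx : IsSortedLocation x) {k : Fin n} {y θ : ℝ}
    (hy : y ∈ Icc (0:ℝ) 1) (hk : k + 1 ∈ nearest x y)
    (hθ : (θ : UnitAddCircle) = y - x (k + 1))
    (hθn : |θ| = ‖(x (k + 1) : UnitAddCircle) - y‖) :
    -((if gap x k = 0 then maxGap x else gap x k) / 2) ≤ θ := by
  rw [mem_nearest_iff_norm hx.mem_Icc hy] at hk
  split_ifs with ha
  · obtain ⟨i, hi⟩ := hx.exists_norm_sub_le_half_maxGap hy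
    linarith [neg_abs_le θ, hk i]
  · suffices -θ ≤ gap x k / 2 by linarith
    refine UnitAddCircle.le_half_of_abs_le_norm_coe_sub ((hx.gap_nonneg k).lt_of_ne' ha) ?_
    have : ((-θ - gap x k : ℝ) : UnitAddCircle) = (x k : UnitAddCircle) - y := by
      rw [AddCircle.coe_sub, AddCircle.coe_neg, hθ, ← coe_nextVal, nextVal_eq_add_gap,
        AddCircle.coe_add]; abel
    rw [abs_neg, hθn, this]
    exact hk k

theorem three_le_of_gap_add_gap_lt (hx : IsSortedLocation x) {k : Fin n}
    (hk : gap x k + gap x (k + 1) < maxGap x) : 3 ≤ n := by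
  obtain ⟨l, hl⟩ := exists_gap_eq_maxGap x
  have hlk : l ≠ k := by rintro rfl; linarith [hx.gap_nonneg (l + 1)]
  have hlk' : l ≠ k + 1 := by rintro rfl; linarith [hx.gap_nonneg k]
  have hkk : k ≠ k + 1 := fun h => by
    have : 2 ≤ n := by simpa using (Finset.card_pair hlk).symm.trans_le (Finset.card_le_univ _)
    have := congrArg Fin.val h
    rw [Fin.val_add_one_eq_ite] at this
    split_ifs at this <;> omega
  have hcard : ({l, k, k + 1} : Finset (Fin n)).card = 3 := by
    rw [Finset.card_insert_of_notMem (by simp [hlk, hlk']), Finset.card_pair hkk]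
  simpa using hcard.symm.trans_le (Finset.card_le_univ _)

theorem profit_lt_half_maxGap (hx : IsSortedLocation x) {k : Fin n}
    (hk : gap x k + gap x (k + 1) < maxGap x) : profit (k + 1) x < maxGap x / 2 := by
  set L := maxGap x
  set A := if gap x k = 0 then L else gap x k
  set B := if gap x (k + 1) = 0 then L else gap x (k + 1)
  set V := vendorsAt x (x (k + 1))
  have hL : 0 < L := by linarith [hx.gap_nonneg k, hx.gap_nonneg (k + 1)]
  have hV := le_card_vendorsAt (hx.three_le_of_gap_add_gap_lt hk) x k
  have hVpos : 0 < V.card := Nat.lt_of_lt_of_le (by omega) hV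
  have hAB : A + B < V.card * L :=
    ite_add_ite_lt_mul (hx.gap_nonneg k) (hx.gap_nonneg (k + 1)) hk hV
  have hA : 0 ≤ A := by unfold A; split_ifs <;> linarith [hx.gap_nonneg k]
  have hB : 0 ≤ B := by unfold B; split_ifs <;> linarith [hx.gap_nonneg (k + 1)]
  have hball (y : ℝ) (hy : y ∈ Icc (0:ℝ) 1) (hk : k + 1 ∈ nearest x y) :
      (y : UnitAddCircle) ∈ Metric.closedBall ((x (k + 1) + (B - A) / 4 : ℝ) : UnitAddCircle)
        ((A + B) / 4) := by
    obtain ⟨θ, hθ, hθn⟩ :=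
      UnitAddCircle.exists_coe_eq_and_abs_eq_norm ((y : UnitAddCircle) - x (k + 1))
    rw [← norm_neg, neg_sub] at hθn
    have h₁ := hx.neg_offset_le_of_mem_nearest hy hk hθ hθn
    have h₂ := hx.offset_le_of_mem_nearest hy hk hθ hθn
    rw [Metric.mem_closedBall, dist_eq_norm, AddCircle.coe_add, ← sub_sub, ← hθ,
      ← AddCircle.coe_sub]
    exact (UnitAddCircle.norm_coe_le_abs _).trans (abs_le.mpr ⟨by linarith, by linarith⟩)
  calc profit (k + 1) x ≤ 2 * ((A + B) / 4) / V.card :=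
        profit_le_of_forall_mem_nearest x (by positivity) hVpos fun y hy hk =>
          ⟨hball y (Ioc_subset_Icc_self hy) hk, Finset.card_le_card
            (vendorsAt_subset_nearest hx.mem_Icc (Ioc_subset_Icc_self hy) hk)⟩
    _ < L / 2 := by
        rw [div_lt_iff₀ (by exact_mod_cast hVpos)]; linarith

end IsSortedLocation

theorem not_equilibrium_of_small_gaps_general {n : ℕ} [NeZero n]
    (x : Fin n → ℝ) (hx0 : x 0 = 0) (hmono : Monotone x) (hx1 : ∀ j, x j ≤ 1)
    (hbad : ∃ k : Fin n, gap x k + gap x (k + 1) < maxGap x) :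
    ∃ k : Fin n, ∃ x' ∈ Set.Icc (0:ℝ) 1,
      (∃ l : Fin n, gap x l = maxGap x ∧ x l < x' ∧ x' < nextVal x l) ∧
      profit k x < profit k (Function.update x k x') := by
  have hx : IsSortedLocation x := ⟨hx0, hmono, hx1⟩
  obtain ⟨k, hk⟩ := hbad
  obtain ⟨l, hl⟩ := exists_gap_eq_maxGap x
  have hl_pos : 0 < gap x l := by linarith [hx.gap_nonneg k, hx.gap_nonneg (k + 1)]
  have hnext := nextVal_eq_add_gap x l
  refine ⟨k + 1, x l + gap x l / 2,
    ⟨by linarith [hx.nonneg l], by linarith [hx.nextVal_le_one l]⟩,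
    ⟨l, hl, by linarith, by linarith⟩, ?_⟩
  calc profit (k + 1) x < maxGap x / 2 := hx.profit_lt_half_maxGap hk
    _ = gap x l / 2 := by rw [hl]
    _ ≤ _ := hx.half_gap_le_profit_update (k + 1) l

theorem not_equilibrium_of_small_gaps {n : ℕ} [NeZero n] (hn : 2 ≤ n)
    (x : Fin n → ℝ) (hx0 : x 0 = 0) (hmono : Monotone x) (hx1 : ∀ j, x j ≤ 1)
    (hbad : ∃ k : Fin n, gap x k + gap x (k + 1) < maxGap x) :
    ∃ k : Fin n, ∃ x' ∈ Set.Icc (0:ℝ) 1,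
      (∃ l : Fin n, gap x l = maxGap x ∧ x l < x' ∧ x' < nextVal x l) ∧
      profit k x < profit k (Function.update x k x') :=
  not_equilibrium_of_small_gaps_general x hx0 hmono hx1 hbad
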